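/- Let (F,μ) be an RDS of continuous maps on a compact metric space (M,D) satisfying properties (P) and (LC) with rate q ∈ (0,1). Then for every x,y ∈ M the set Ω^{x,y} := { i ∈ F^ℕ : there exists n ∈ ℕ such that D(X_{n+k}^x(i), X_{n+k}^y(i)) ≤ q^k for all k ≥ 0 } has full measure: μ^ℕ(Ω^{x,y}) = 1. -/

import Mathlib

open MeasureTheory Topology Filter

noncomputable section

/-- `rdsIter i n` is the composition `i (n-1) ∘ ⋯ ∘ i 0`, i.e. the random orbit map `f_i^n`. -/
def rdsIter {M : Type*} [TopologicalSpace M] (i : ℕ → C(M, M)) : ℕ → M → M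
  | 0, x => x
  | n + 1, x => i n (rdsIter i n x)

/-- `P` is the infinite product of copies of `μ` (the measure `μ^ℕ`). -/
def IsProductMeasure {Ω : Type*} [MeasurableSpace Ω] (μ : Measure Ω)
    (P : Measure (ℕ → Ω)) : Prop :=
  IsProbabilityMeasure P ∧
    ∀ (n : ℕ) (s : Fin n → Set Ω), (∀ k, MeasurableSet (s k)) →
      P {ω | ∀ k : Fin n, ω (k : ℕ) ∈ s k} = ∏ k : Fin n, μ (s k)

/-- The topological support of a measure. -/
def measSupp {Ω : Type*} [TopologicalSpace Ω] [MeasurableSpace Ω] (μ : Measure Ω) : Set Ω :=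
  {f | ∀ U : Set Ω, IsOpen U → f ∈ U → 0 < μ U}

/-- Property (P): proximality (of `F = supp μ`). -/
def PropP {M : Type*} [MetricSpace M] [CompactSpace M] [MeasurableSpace C(M, M)]
    (μ : Measure C(M, M)) : Prop :=
  ∀ x y : M, ∃ i : ℕ → C(M, M), (∀ n, i n ∈ measSupp μ) ∧
    ∃ φ : ℕ → ℕ, StrictMono φ ∧
      Tendsto (fun k => dist (rdsIter i (φ k) x) (rdsIter i (φ k) y)) atTop (𝓝 0)

/-- Property (LC): local contraction with rate `q`. -/
def PropLC {M : Type*} [MetricSpace M] [CompactSpace M] [MeasurableSpace C(M, M)]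
    (P : Measure (ℕ → C(M, M))) (q : ℝ) : Prop :=
  ∀ x : M, ∀ᵐ i ∂P, ∃ B ∈ 𝓝 x, ∀ n : ℕ, Metric.diam (rdsIter i n '' B) ≤ q ^ n

/-- `ν` is a `μ`-stationary measure. -/
def IsStationaryRDS {M : Type*} [MetricSpace M] [CompactSpace M] [MeasurableSpace M]
    [MeasurableSpace C(M, M)] (μ : Measure C(M, M)) (ν : Measure M) : Prop :=
  ∀ A : Set M, MeasurableSet A → ν A = ∫⁻ f, ν (⇑f ⁻¹' A) ∂μ

/-!
By (LC) and compactness there is `δ > 0` such that orbits of `δ`-close points synchronise at rate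
`q` from time `0` with probability at least `1/2`. By (P), every pair of points is brought
`δ`-close along some word of maps from `supp μ`; by continuity the same holds for a neighbourhood
of that word, which has positive probability. By the Markov property and compactness of `M × M`
this gives `c > 0` with `μ^ℕ(Ω^{u,v}) ≥ c` for all `u, v`.

`Ω^{x,y}` is a tail event, so its conditional probability given the first `m` maps is
`μ^ℕ(Ω^{X_m^x, X_m^y}) ≥ c`. By Lévy's upward theorem these conditional probabilities converge
almost surely to the indicator of `Ω^{x,y}`, which is therefore `1` almost surely.
-/

open ProbabilityTheory

section ProductMeasure

variable {C : Type*} [MeasurableSpace C]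

def seqTake (m : ℕ) (i : ℕ → C) : Fin m → C := fun k => i k

def seqDrop (m : ℕ) (i : ℕ → C) : ℕ → C := fun k => i (m + k)

@[fun_prop]
lemma measurable_seqTake (m : ℕ) : Measurable (seqTake (C := C) m) := by
  unfold seqTake; fun_prop

@[fun_prop]
lemma measurable_seqDrop (m : ℕ) : Measurable (seqDrop (C := C) m) := by
  unfold seqDrop; fun_prop

variable {μ : Measure C} [IsProbabilityMeasure μ] {P : Measure (ℕ → C)}

lemma IsProductMeasure.map_seqTake (hP : IsProductMeasure μ P) (m : ℕ) :
    P.map (seqTake m) = Measure.pi fun _ => μ := by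
  refine (Measure.pi_eq fun s hs => ?_).symm
  rw [Measure.map_apply (measurable_seqTake m) (.univ_pi hs), ← hP.2 m s hs]
  congr 1
  ext ω
  simp [seqTake]

lemma IsProductMeasure.eq_infinitePi (hP : IsProductMeasure μ P) :
    P = Measure.infinitePi fun _ => μ := by
  classical
  refine Measure.eq_infinitePi _ fun s t ht => ?_
  set n := s.sup id + 1
  have hs : ∀ k ∈ s, k < n := fun k hk => Nat.lt_succ_of_le (Finset.le_sup (f := id) hk)
  have hbox : Set.pi (s : Set ℕ) t =
      {ω | ∀ k : Fin n, ω k ∈ if (k : ℕ) ∈ s then t k else .univ} := by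
    ext ω
    simp only [Set.mem_pi, Finset.mem_coe, Set.mem_ofPred_eq]
    constructor
    · intro h k
      split_ifs with hk
      exacts [h k hk, trivial]
    · intro h k hk
      simpa [hk] using h ⟨k, hs k hk⟩
  rw [hbox, hP.2 n _ fun k => by split_ifs <;> simp [ht]]
  simp only [apply_ite μ, measure_univ]
  rw [Fin.prod_univ_eq_prod_range (fun k => if k ∈ s then μ (t k) else 1), Finset.prod_ite_mem,
    Finset.inter_eq_right.2 fun k hk => Finset.mem_range.2 (hs k hk)]

lemma IsProductMeasure.map_seqDrop (hP : IsProductMeasure μ P) (m : ℕ) :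
    P.map (seqDrop m) = P := by
  rw [hP.eq_infinitePi]
  refine Measure.eq_infinitePi _ fun s t ht => ?_
  have hpre : seqDrop m ⁻¹' Set.pi (s : Set ℕ) t =
      Set.pi (s.map (addLeftEmbedding m) : Set ℕ) fun k => t (k - m) := by
    ext ω
    simp [seqDrop, Set.mem_pi]
  rw [Measure.map_apply (measurable_seqDrop m) (.pi s.countable_toSet fun k _ => ht k), hpre,
    Measure.infinitePi_pi _ fun k _ => ht _, Finset.prod_map]
  simp

lemma IsProductMeasure.indepFun_seqTake_seqDrop (hP : IsProductMeasure μ P) (m : ℕ) :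
    IndepFun (seqTake m) (seqDrop m) P := by
  rw [hP.eq_infinitePi]
  have hcoord : iIndepFun (fun k (ω : ℕ → C) => ω k) (Measure.infinitePi fun _ => μ) :=
    iIndepFun_infinitePi (X := fun _ ω => ω) fun _ => measurable_id
  have hblocks := indep_iSup_of_disjoint (fun k => (measurable_pi_apply k).comap_le)
    hcoord.iIndep (S := Set.Iio m) (T := Set.Ici m) (Set.Iio_disjoint_Ici le_rfl)
  have htake : MeasurableSpace.comap (seqTake m) MeasurableSpace.pi ≤
      ⨆ k ∈ Set.Iio m, MeasurableSpace.comap (fun ω : ℕ → C => ω k) ‹_› := by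
    simp_rw [MeasurableSpace.pi, MeasurableSpace.comap_iSup, MeasurableSpace.comap_comp]
    exact iSup_le fun k => le_iSup₂_of_le (k : ℕ) k.2 le_rfl
  have hdrop : MeasurableSpace.comap (seqDrop m) MeasurableSpace.pi ≤
      ⨆ k ∈ Set.Ici m, MeasurableSpace.comap (fun ω : ℕ → C => ω k) ‹_› := by
    simp_rw [MeasurableSpace.pi, MeasurableSpace.comap_iSup, MeasurableSpace.comap_comp]
    exact iSup_le fun k => le_iSup₂_of_le (m + k) (Nat.le_add_right m k) le_rfl
  rw [IndepFun_iff_Indep]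
  exact indep_of_indep_of_le_right (indep_of_indep_of_le_left hblocks htake) hdrop

lemma IsProductMeasure.map_seqTake_seqDrop (hP : IsProductMeasure μ P) (m : ℕ) :
    P.map (fun i => (seqTake m i, seqDrop m i)) = (Measure.pi fun _ => μ).prod P := by
  have := hP.1
  rw [(indepFun_iff_map_prod_eq_prod_map_map (by fun_prop) (by fun_prop)).1
    (hP.indepFun_seqTake_seqDrop m), hP.map_seqTake, hP.map_seqDrop]

-- The Markov property of `μ^ℕ`: given the first `m` coordinates, the shifted sequence is again
-- `μ^ℕ`-distributed.
lemma IsProductMeasure.measure_seqTake_preimage_inter (hP : IsProductMeasure μ P) {m : ℕ}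
    {S : Set (Fin m → C)} (hS : MeasurableSet S) {F : (Fin m → C) → Set (ℕ → C)}
    (hF : MeasurableSet {p : (Fin m → C) × (ℕ → C) | p.2 ∈ F p.1}) :
    P (seqTake m ⁻¹' S ∩ {i | seqDrop m i ∈ F (seqTake m i)}) =
      ∫⁻ i in seqTake m ⁻¹' S, P (F (seqTake m i)) ∂P := by
  have := hP.1
  have hE : MeasurableSet (S ×ˢ Set.univ ∩ {p : (Fin m → C) × (ℕ → C) | p.2 ∈ F p.1}) :=
    (hS.prod .univ).inter hF
  calc P (seqTake m ⁻¹' S ∩ {i | seqDrop m i ∈ F (seqTake m i)})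
      = P.map (fun i => (seqTake m i, seqDrop m i))
          (S ×ˢ Set.univ ∩ {p | p.2 ∈ F p.1}) := by
        rw [Measure.map_apply (by fun_prop) hE]
        congr 1 with i
        simp
    _ = ∫⁻ w in S, P (F w) ∂(Measure.pi fun _ => μ) := by
        rw [hP.map_seqTake_seqDrop, Measure.prod_apply hE, ← lintegral_indicator hS]
        congr 1 with w
        by_cases hw : w ∈ S <;> simp [hw]
    _ = ∫⁻ i in seqTake m ⁻¹' S, P (F (seqTake m i)) ∂P := by
        rw [← hP.map_seqTake]
        exact setLIntegral_map hS (measurable_measure_prodMk_left hF) (by fun_prop)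

variable (C) in
def seqTakeFiltration :
    Filtration ℕ (MeasurableSpace.pi : MeasurableSpace (ℕ → C)) where
  seq m := MeasurableSpace.comap (seqTake m) inferInstance
  mono' m m' hm := by
    have : seqTake (C := C) m = (fun w k => w (Fin.castLE hm k)) ∘ seqTake m' := rfl
    dsimp only
    rw [this, ← MeasurableSpace.comap_comp]
    exact MeasurableSpace.comap_mono (measurable_iff_comap_le.1 (by fun_prop))
  le' m := (measurable_seqTake m).comap_le

lemma iSup_seqTakeFiltration :
    ⨆ m, seqTakeFiltration C m = (MeasurableSpace.pi : MeasurableSpace (ℕ → C)) := by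
  refine le_antisymm (iSup_le (seqTakeFiltration C).le)
    (iSup_le fun k => le_iSup_of_le (k + 1) ?_)
  have : (fun ω : ℕ → C => ω k) = (fun w => w (Fin.last k)) ∘ seqTake (k + 1) := rfl
  rw [this, ← MeasurableSpace.comap_comp]
  exact MeasurableSpace.comap_mono (measurable_iff_comap_le.1 (by fun_prop))

end ProductMeasure

lemma measure_eq_one_of_le_condExp_indicator {Ω : Type*} {mΩ : MeasurableSpace Ω}
    {P : Measure Ω} [IsProbabilityMeasure P] {ℱ : Filtration ℕ mΩ} (hℱ : ⨆ n, ℱ n = mΩ)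
    {A : Set Ω} (hA : MeasurableSet A) {c : ℝ} (hc : 0 < c)
    (h : ∀ n, ∀ᵐ ω ∂P, c ≤ P[A.indicator 1 | ℱ n] ω) : P A = 1 := by
  have hlevy := ((integrable_const (μ := P) (1 : ℝ)).indicator hA).tendsto_ae_condExp
    (ℱ := ℱ) (by rw [hℱ]; exact stronglyMeasurable_const.indicator hA)
  have hae : ∀ᵐ ω ∂P, ω ∈ A := by
    filter_upwards [hlevy, ae_all_iff.2 h] with ω hlim hge
    by_contra hω
    have := ge_of_tendsto' hlim hge
    simp only [Set.indicator_of_notMem hω] at this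
    linarith
  exact ((ae_iff_measure_eq hA.nullMeasurableSet).1 hae).trans measure_univ

section RandomOrbits

variable {M : Type*} [TopologicalSpace M]

lemma rdsIter_add (i : ℕ → C(M, M)) (m k : ℕ) (x : M) :
    rdsIter i (m + k) x = rdsIter (seqDrop m i) k (rdsIter i m x) := by
  induction k with
  | zero => rfl
  | succ k ih => exact congrArg (i (m + k)) ih

lemma rdsIter_congr {i j : ℕ → C(M, M)} {m : ℕ} (h : ∀ k < m, i k = j k) (x : M) :
    rdsIter i m x = rdsIter j m x := by
  induction m with
  | zero => rfl
  | succ m ih =>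
    simp only [rdsIter]
    rw [ih fun k hk => h k (hk.trans m.lt_succ_self), h m m.lt_succ_self]

def wordIter {m : ℕ} (w : Fin m → C(M, M)) : M → M :=
  rdsIter (fun k => if h : k < m then w ⟨k, h⟩ else ContinuousMap.id M) m

lemma wordIter_seqTake (m : ℕ) (i : ℕ → C(M, M)) (x : M) :
    wordIter (seqTake m i) x = rdsIter i m x :=
  rdsIter_congr (fun k hk => by simp [seqTake, hk]) x

variable [LocallyCompactSpace M]

lemma continuous_rdsIter (n : ℕ) :
    Continuous fun p : (ℕ → C(M, M)) × M => rdsIter p.1 n p.2 := by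
  induction n with
  | zero => exact continuous_snd
  | succ n ih =>
    exact continuous_eval.comp (((continuous_apply n).comp continuous_fst).prodMk ih)

lemma continuous_wordIter (m : ℕ) :
    Continuous fun p : (Fin m → C(M, M)) × M => wordIter p.1 p.2 := by
  have hpad : Continuous fun w : Fin m → C(M, M) =>
      fun k => if h : k < m then w ⟨k, h⟩ else ContinuousMap.id M :=
    continuous_pi fun k => by split_ifs <;> fun_prop
  exact (continuous_rdsIter m).comp ((hpad.comp continuous_fst).prodMk continuous_snd)

end RandomOrbits

section SyncEvents

variable {M : Type*} [MetricSpace M]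

def syncSet (q : ℝ) (x y : M) : Set (ℕ → C(M, M)) :=
  {i | ∀ k, dist (rdsIter i k x) (rdsIter i k y) ≤ q ^ k}

def eventualSyncSet (q : ℝ) (x y : M) : Set (ℕ → C(M, M)) :=
  {i | ∃ n, ∀ k, dist (rdsIter i (n + k) x) (rdsIter i (n + k) y) ≤ q ^ k}

lemma mem_eventualSyncSet_iff_seqDrop {q : ℝ} (hq0 : 0 ≤ q) (hq1 : q ≤ 1) (m : ℕ)
    (i : ℕ → C(M, M)) (x y : M) :
    i ∈ eventualSyncSet q x y ↔
      seqDrop m i ∈ eventualSyncSet q (rdsIter i m x) (rdsIter i m y) := by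
  simp only [eventualSyncSet, Set.mem_ofPred_eq, ← rdsIter_add]
  constructor
  · rintro ⟨n, hn⟩
    refine ⟨n, fun k => ?_⟩
    rw [← add_assoc, add_comm m n, add_assoc]
    exact (hn (m + k)).trans (pow_le_pow_of_le_one hq0 hq1 (Nat.le_add_left k m))
  · rintro ⟨n, hn⟩
    exact ⟨m + n, fun k => by simpa only [add_assoc] using hn k⟩

lemma seqDrop_mem_syncSet_subset {q : ℝ} (m : ℕ) (x y : M) :
    {i | seqDrop m i ∈ syncSet q (rdsIter i m x) (rdsIter i m y)} ⊆ eventualSyncSet q x y :=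
  fun i hi => ⟨m, fun k => by simpa only [rdsIter_add] using hi k⟩

variable [LocallyCompactSpace M] {X : Type*} [TopologicalSpace X] [MeasurableSpace X]
  [OpensMeasurableSpace X] {a : X → ℕ → C(M, M)} {f g : X → M}

lemma measurable_dist_rdsIter (ha : Continuous a) (hf : Continuous f) (hg : Continuous g)
    (n : ℕ) : Measurable fun z => dist (rdsIter (a z) n (f z)) (rdsIter (a z) n (g z)) :=
  (((continuous_rdsIter n).comp (ha.prodMk hf)).dist
    ((continuous_rdsIter n).comp (ha.prodMk hg))).measurable

lemma measurableSet_syncSet_comp (q : ℝ) (ha : Continuous a) (hf : Continuous f)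
    (hg : Continuous g) : MeasurableSet {z | a z ∈ syncSet q (f z) (g z)} := by
  simp only [syncSet, Set.mem_ofPred_eq]
  rw [Set.ofPred_forall]
  exact .iInter fun k => measurableSet_le (measurable_dist_rdsIter ha hf hg k) measurable_const

lemma measurableSet_eventualSyncSet_comp (q : ℝ) (ha : Continuous a) (hf : Continuous f)
    (hg : Continuous g) : MeasurableSet {z | a z ∈ eventualSyncSet q (f z) (g z)} := by
  simp only [eventualSyncSet, Set.mem_ofPred_eq]
  simp only [Set.ofPred_exists, Set.ofPred_forall]
  exact .iUnion fun n => .iInter fun k =>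
    measurableSet_le (measurable_dist_rdsIter ha hf hg (n + k)) measurable_const

end SyncEvents

section MarkovProperty

variable {M : Type*} [MetricSpace M] [CompactSpace M] [MeasurableSpace C(M, M)]
  [BorelSpace C(M, M)] {μ : Measure C(M, M)} [IsProbabilityMeasure μ]
  {P : Measure (ℕ → C(M, M))} {q : ℝ}

lemma measurableSet_eventualSyncSet (q : ℝ) (x y : M) :
    MeasurableSet (eventualSyncSet q x y) :=
  measurableSet_eventualSyncSet_comp (a := id) q continuous_id continuous_const continuous_const

lemma measurableSet_wordIter_eventualSyncSet (q : ℝ) (m : ℕ) (x y : M) :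
    MeasurableSet {p : (Fin m → C(M, M)) × (ℕ → C(M, M)) |
      p.2 ∈ eventualSyncSet q (wordIter p.1 x) (wordIter p.1 y)} :=
  measurableSet_eventualSyncSet_comp q continuous_snd
    ((continuous_wordIter m).comp (continuous_fst.prodMk continuous_const))
    ((continuous_wordIter m).comp (continuous_fst.prodMk continuous_const))

lemma IsProductMeasure.measure_seqTake_preimage_inter_eventualSyncSet
    (hP : IsProductMeasure μ P) (hq0 : 0 ≤ q) (hq1 : q ≤ 1) {m : ℕ} {S : Set (Fin m → C(M, M))}
    (hS : MeasurableSet S) (x y : M) :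
    P (seqTake m ⁻¹' S ∩ eventualSyncSet q x y) =
      ∫⁻ i in seqTake m ⁻¹' S, P (eventualSyncSet q (rdsIter i m x) (rdsIter i m y)) ∂P := by
  have htail : {i | seqDrop m i ∈
      eventualSyncSet q (wordIter (seqTake m i) x) (wordIter (seqTake m i) y)} =
      eventualSyncSet q x y := by
    ext i
    simp only [wordIter_seqTake, Set.mem_ofPred_eq]
    exact (mem_eventualSyncSet_iff_seqDrop hq0 hq1 m i x y).symm
  rw [← htail, hP.measure_seqTake_preimage_inter
    (F := fun w => eventualSyncSet q (wordIter w x) (wordIter w y)) hS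
    (measurableSet_wordIter_eventualSyncSet q m x y)]
  simp_rw [wordIter_seqTake]

lemma IsProductMeasure.condExp_indicator_eventualSyncSet (hP : IsProductMeasure μ P)
    (hq0 : 0 ≤ q) (hq1 : q ≤ 1) (m : ℕ) (x y : M) :
    P[(eventualSyncSet q x y).indicator 1 | seqTakeFiltration C(M, M) m] =ᵐ[P]
      fun i => P.real (eventualSyncSet q (rdsIter i m x) (rdsIter i m y)) := by
  have := hP.1
  have hA := measurableSet_eventualSyncSet q x y
  have hprob_meas : Measurable[seqTakeFiltration C(M, M) m]
      fun i => P (eventualSyncSet q (rdsIter i m x) (rdsIter i m y)) := by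
    simp_rw [← wordIter_seqTake m _ x, ← wordIter_seqTake m _ y]
    exact (measurable_measure_prodMk_left (measurableSet_wordIter_eventualSyncSet q m x y)).comp
      (comap_measurable _)
  have hmeas := hprob_meas.ennreal_toReal
  have hint : Integrable
      (fun i => P.real (eventualSyncSet q (rdsIter i m x) (rdsIter i m y))) P :=
    .of_bound (hmeas.mono ((seqTakeFiltration _).le m) le_rfl).aestronglyMeasurable 1
      (ae_of_all _ fun _ => by
        rw [Real.norm_of_nonneg measureReal_nonneg]
        exact measureReal_le_one)
  refine (ae_eq_condExp_of_forall_setIntegral_eq _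
    ((integrable_const (μ := P) (1 : ℝ)).indicator hA) (fun s _ _ => hint.integrableOn)
    (fun s hs _ => ?_) hmeas.stronglyMeasurable.aestronglyMeasurable).symm
  obtain ⟨S, hS, rfl⟩ := hs
  calc ∫ i in seqTake m ⁻¹' S, P.real (eventualSyncSet q (rdsIter i m x) (rdsIter i m y)) ∂P
      = (∫⁻ i in seqTake m ⁻¹' S,
          P (eventualSyncSet q (rdsIter i m x) (rdsIter i m y)) ∂P).toReal := by
        simp_rw [measureReal_def]
        exact integral_toReal (hprob_meas.mono ((seqTakeFiltration _).le m) le_rfl).aemeasurable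
          (ae_of_all _ fun _ => measure_lt_top _ _)
    _ = P.real (seqTake m ⁻¹' S ∩ eventualSyncSet q x y) := by
        rw [measureReal_def, hP.measure_seqTake_preimage_inter_eventualSyncSet hq0 hq1 hS]
    _ = ∫ i in seqTake m ⁻¹' S, (eventualSyncSet q x y).indicator 1 i ∂P := by
        rw [setIntegral_indicator hA]
        simp

end MarkovProperty

lemma CompactSpace.exists_pos_le_of_eventually {X : Type*} [TopologicalSpace X]
    [CompactSpace X] {f : X → ENNReal} (h : ∀ x, ∃ c > 0, ∀ᶠ y in 𝓝 x, c ≤ f y) :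
    ∃ c > 0, ∀ y, c ≤ f y := by
  choose c hc hev using h
  obtain ⟨t, -, hcover⟩ := isCompact_univ.elim_nhds_subcover (fun x => {y | c x ≤ f y})
    fun x _ => hev x
  refine ⟨t.inf c, (Finset.lt_inf_iff ENNReal.zero_lt_top).2 fun x _ => hc x, fun y => ?_⟩
  obtain ⟨x, hx, hxy⟩ := Set.mem_iUnion₂.1 (hcover (Set.mem_univ y))
  exact (Finset.inf_le hx).trans hxy

lemma measure_pi_pos_of_forall_mem_measSupp {C : Type*} [TopologicalSpace C]
    [MeasurableSpace C] [OpensMeasurableSpace C] {μ : Measure C} [SigmaFinite μ] {n : ℕ}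
    {w : Fin n → C} (hw : ∀ k, w k ∈ measSupp μ) {U : Set (Fin n → C)} (hU : IsOpen U)
    (hwU : w ∈ U) : 0 < Measure.pi (fun _ => μ) U := by
  obtain ⟨V, hV, hVU⟩ := isOpen_pi_iff'.1 hU w hwU
  refine lt_of_lt_of_le ?_ (measure_mono hVU)
  rw [Measure.pi_pi, CanonicallyOrderedAdd.prod_pos]
  exact fun k _ => hw k (V k) (hV k).1 (hV k).2

section LowerBound

variable {M : Type*} [MetricSpace M] [CompactSpace M] [MeasurableSpace C(M, M)]
  {q : ℝ}

lemma PropLC.exists_ball_half_le_measure_syncSet {P : Measure (ℕ → C(M, M))}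
    [IsProbabilityMeasure P] (hLC : PropLC P q) (z : M) :
    ∃ r > 0, ∀ u ∈ Metric.ball z r, ∀ v ∈ Metric.ball z r, 2⁻¹ ≤ P (syncSet q u v) := by
  set E : ℕ → Set (ℕ → C(M, M)) := fun j =>
    {i | ∀ n, Metric.diam (rdsIter i n '' Metric.ball z (1 / (j + 1))) ≤ q ^ n}
  have hmono : Monotone E := fun j j' hj i hi n =>
    (Metric.diam_mono (Set.image_mono (Metric.ball_subset_ball (Nat.one_div_le_one_div hj)))
      Metric.isBounded_of_compactSpace).trans (hi n)
  have hfull : P (⋃ j, E j) = 1 := by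
    rw [← measure_univ (μ := P)]
    refine measure_congr (ae_eq_univ.2 (ae_iff.1 ?_))
    filter_upwards [hLC z] with i ⟨B, hB, hdiam⟩
    obtain ⟨ε, hε, hball⟩ := Metric.mem_nhds_iff.1 hB
    obtain ⟨j, hj⟩ := exists_nat_one_div_lt hε
    exact Set.mem_iUnion.2 ⟨j, fun n => (Metric.diam_mono (Set.image_mono
      ((Metric.ball_subset_ball hj.le).trans hball)) Metric.isBounded_of_compactSpace).trans
        (hdiam n)⟩
  obtain ⟨j, hj⟩ := ((tendsto_measure_iUnion_atTop hmono).eventually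
    (lt_mem_nhds (hfull ▸ ENNReal.one_half_lt_one))).exists
  refine ⟨1 / (j + 1), Nat.one_div_pos_of_nat, fun u hu v hv => hj.le.trans (measure_mono ?_)⟩
  exact fun i hi k => (Metric.dist_le_diam_of_mem Metric.isBounded_of_compactSpace
    (Set.mem_image_of_mem _ hu) (Set.mem_image_of_mem _ hv)).trans (hi k)

lemma PropLC.exists_pos_half_le_measure_syncSet {P : Measure (ℕ → C(M, M))}
    [IsProbabilityMeasure P] (hLC : PropLC P q) :
    ∃ δ > 0, ∀ u v : M, dist u v < δ → 2⁻¹ ≤ P (syncSet q u v) := by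
  choose r hr hsync using hLC.exists_ball_half_le_measure_syncSet
  obtain ⟨δ, hδ, hleb⟩ := lebesgue_number_lemma_of_metric isCompact_univ
    (fun z => Metric.isOpen_ball (x := z) (ε := r z))
    fun u _ => Set.mem_iUnion.2 ⟨u, Metric.mem_ball_self (hr u)⟩
  refine ⟨δ, hδ, fun u v huv => ?_⟩
  obtain ⟨z, hz⟩ := hleb u (Set.mem_univ u)
  exact hsync z u (hz (Metric.mem_ball_self hδ)) v (hz (Metric.mem_ball'.2 huv))

variable [BorelSpace C(M, M)] {μ : Measure C(M, M)} [IsProbabilityMeasure μ]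
  {P : Measure (ℕ → C(M, M))}

lemma IsProductMeasure.half_measure_le_measure_eventualSyncSet (hP : IsProductMeasure μ P)
    {δ : ℝ} (hsync : ∀ u v : M, dist u v < δ → 2⁻¹ ≤ P (syncSet q u v)) {n : ℕ}
    {U : Set (Fin n → C(M, M))} (hU : MeasurableSet U) {u v : M}
    (hUδ : ∀ w ∈ U, dist (wordIter w u) (wordIter w v) < δ) :
    2⁻¹ * P (seqTake n ⁻¹' U) ≤ P (eventualSyncSet q u v) := by
  have := hP.1
  have hF : MeasurableSet {p : (Fin n → C(M, M)) × (ℕ → C(M, M)) |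
      p.2 ∈ syncSet q (wordIter p.1 u) (wordIter p.1 v)} :=
    measurableSet_syncSet_comp q continuous_snd
      ((continuous_wordIter n).comp (continuous_fst.prodMk continuous_const))
      ((continuous_wordIter n).comp (continuous_fst.prodMk continuous_const))
  calc 2⁻¹ * P (seqTake n ⁻¹' U) = ∫⁻ _ in seqTake n ⁻¹' U, 2⁻¹ ∂P := by
        rw [setLIntegral_const, mul_comm]
    _ ≤ ∫⁻ i in seqTake n ⁻¹' U,
          P (syncSet q (wordIter (seqTake n i) u) (wordIter (seqTake n i) v)) ∂P :=
        setLIntegral_mono ((measurable_measure_prodMk_left hF).comp (measurable_seqTake n))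
          fun i hi => hsync _ _ (hUδ _ hi)
    _ = P (seqTake n ⁻¹' U ∩ {i | seqDrop n i ∈
          syncSet q (wordIter (seqTake n i) u) (wordIter (seqTake n i) v)}) :=
        (hP.measure_seqTake_preimage_inter
          (F := fun w => syncSet q (wordIter w u) (wordIter w v)) hU hF).symm
    _ ≤ P (eventualSyncSet q u v) := by
        simp_rw [wordIter_seqTake]
        exact measure_mono (Set.inter_subset_right.trans (seqDrop_mem_syncSet_subset n u v))

lemma IsProductMeasure.exists_pos_le_measure_eventualSyncSet (hP : IsProductMeasure μ P)
    (hProx : PropP μ) (hLC : PropLC P q) :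
    ∃ c > 0, ∀ x y : M, c ≤ P (eventualSyncSet q x y) := by
  have := hP.1
  obtain ⟨δ, hδ, hsync⟩ := hLC.exists_pos_half_le_measure_syncSet
  obtain ⟨c, hc, hle⟩ := CompactSpace.exists_pos_le_of_eventually
    (f := fun p : M × M => P (eventualSyncSet q p.1 p.2)) fun ⟨u, v⟩ => by
      obtain ⟨i, hi, φ, -, hφ⟩ := hProx u v
      obtain ⟨K, hK⟩ := (hφ.eventually (gt_mem_nhds hδ)).exists
      have hG : IsOpen {p : (Fin (φ K) → C(M, M)) × (M × M) |
          dist (wordIter p.1 p.2.1) (wordIter p.1 p.2.2) < δ} :=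
        isOpen_lt (((continuous_wordIter _).comp (continuous_fst.prodMk
          continuous_snd.fst)).dist ((continuous_wordIter _).comp
            (continuous_fst.prodMk continuous_snd.snd))) continuous_const
      obtain ⟨U, V, hU, hV, hiU, huvV, hUV⟩ := isOpen_prod_iff.1 hG (seqTake (φ K) i) (u, v)
        (by simpa only [Set.mem_ofPred_eq, wordIter_seqTake] using hK)
      have hUpos : 0 < P (seqTake (φ K) ⁻¹' U) := by
        rw [← Measure.map_apply (measurable_seqTake _) hU.measurableSet, hP.map_seqTake]
        exact measure_pi_pos_of_forall_mem_measSupp (fun k => hi k) hU hiU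
      exact ⟨2⁻¹ * P (seqTake (φ K) ⁻¹' U), ENNReal.mul_pos (by norm_num) hUpos.ne',
        Filter.eventually_of_mem (hV.mem_nhds huvV) fun p hp =>
          hP.half_measure_le_measure_eventualSyncSet hsync hU.measurableSet
            fun w hw => hUV (Set.mk_mem_prod hw hp)⟩
  exact ⟨c, hc, fun x y => hle (x, y)⟩

end LowerBound

theorem stmt4_general {M : Type*} [MetricSpace M] [CompactSpace M]
    [MeasurableSpace C(M, M)] [BorelSpace C(M, M)]
    (μ : Measure C(M, M)) [IsProbabilityMeasure μ]
    (P : Measure (ℕ → C(M, M))) (hP : IsProductMeasure μ P)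
    (q : ℝ) (hq : q ∈ Set.Ioo (0 : ℝ) 1)
    (hProx : PropP μ) (hLC : PropLC P q) :
    ∀ x y : M,
      P {i : ℕ → C(M, M) | ∃ n : ℕ, ∀ k : ℕ,
          dist (rdsIter i (n + k) x) (rdsIter i (n + k) y) ≤ q ^ k} = 1 := by
  intro x y
  show P (eventualSyncSet q x y) = 1
  have := hP.1
  obtain ⟨c, hc, hle⟩ := hP.exists_pos_le_measure_eventualSyncSet hProx hLC
  have hc_top : c ≠ ⊤ := ne_top_of_le_ne_top (measure_ne_top P _) (hle x y)
  refine measure_eq_one_of_le_condExp_indicator iSup_seqTakeFiltration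
    (measurableSet_eventualSyncSet q x y) (ENNReal.toReal_pos hc.ne' hc_top) fun m => ?_
  filter_upwards [hP.condExp_indicator_eventualSyncSet hq.1.le hq.2.le m x y] with i hi
  rw [hi]
  exact ENNReal.toReal_mono (measure_ne_top _ _) (hle _ _)

theorem stmt4 {M : Type*} [MetricSpace M] [CompactSpace M]
    [MeasurableSpace M] [BorelSpace M]
    [MeasurableSpace C(M, M)] [BorelSpace C(M, M)]
    (μ : Measure C(M, M)) [IsProbabilityMeasure μ]
    (P : Measure (ℕ → C(M, M))) (hP : IsProductMeasure μ P)
    (q : ℝ) (hq : q ∈ Set.Ioo (0 : ℝ) 1)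
    (hProx : PropP μ) (hLC : PropLC P q) :
    ∀ x y : M,
      P {i : ℕ → C(M, M) | ∃ n : ℕ, ∀ k : ℕ,
          dist (rdsIter i (n + k) x) (rdsIter i (n + k) y) ≤ q ^ k} = 1 :=
  stmt4_general μ P hP q hq hProx hLC
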